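/- Define, for a natural number n ≥ 3, the upper incomplete Gamma value Γ(n/2, 1) = ∫_1^∞ t^{n/2−1} e^{−t} dt, the constant C'_n = n^{n/2}·e·Γ(n/2,1)/2, and the Cheng–Li–Yau constant ε_CLY(n) = 1/(2n + 3 + 2·exp(2n·C'_n)). Then ε_CLY(n) > 0 for all n ≥ 3, ε_CLY(n) < ε_CLY(3) for all n > 3, and 2.2×10^{−10} < ε_CLY(3) < 2.4×10^{−10}. -/

import Mathlib

/-- The upper incomplete Gamma function at `1`: `Γ(s,1) = ∫_1^∞ t^{s-1} e^{-t} dt`. -/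
noncomputable def gammaIncOne (s : ℝ) : ℝ :=
  ∫ t in Set.Ioi (1 : ℝ), t ^ (s - 1) * Real.exp (-t)

/-- The constant `C'_n = n^{n/2} · e · Γ(n/2, 1) / 2`. -/
noncomputable def C' (n : ℕ) : ℝ :=
  (n : ℝ) ^ ((n : ℝ) / 2) * Real.exp 1 * gammaIncOne ((n : ℝ) / 2) / 2

/-- The Cheng–Li–Yau constant `ε_CLY(n) = 1/(2n + 3 + 2 exp(2n C'_n))`. -/
noncomputable def epsCLY (n : ℕ) : ℝ :=
  1 / (2 * (n : ℝ) + 3 + 2 * Real.exp (2 * (n : ℝ) * C' n))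

/-!
Positivity is immediate, and `ε_CLY` is strictly decreasing because `n ↦ n·C'_n` is monotone:
both `n^{n/2}` and `Γ(n/2,1)` increase with `n`.

For `n = 3` we have `Γ(3/2,1) = √π/2 - γ(3/2,1)`, and the lower incomplete Gamma value
`γ(3/2,1) = ∫_0^1 t^{1/2} e^{-t} dt` is computed to within `2·10⁻⁴` by integrating the degree-6
Taylor polynomial of `e^{-t}` termwise. This places `6 C'_3 = 3 √27 e Γ(3/2,1)` in
`(21.48, 21.51)`, and `e^x` at these endpoints is bounded by `e^21` times a Taylor estimate.
-/

open MeasureTheory Real Set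
open scoped Nat

lemma integrableOn_rpow_mul_exp_neg {s : ℝ} (hs : 0 < s) :
    IntegrableOn (fun t : ℝ => t ^ (s - 1) * exp (-t)) (Ioi 0) :=
  (GammaIntegral_convergent hs).congr_fun (fun _ _ => mul_comm _ _) measurableSet_Ioi

lemma gammaIncOne_nonneg (s : ℝ) : 0 ≤ gammaIncOne s :=
  setIntegral_nonneg measurableSet_Ioi fun t (ht : 1 < t) =>
    mul_nonneg (rpow_nonneg (by linarith) _) (exp_pos _).le

lemma gammaIncOne_mono {s₁ s₂ : ℝ} (hs₁ : 0 < s₁) (h : s₁ ≤ s₂) :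
    gammaIncOne s₁ ≤ gammaIncOne s₂ := by
  have hIoi : Ioi (1 : ℝ) ⊆ Ioi 0 := Ioi_subset_Ioi zero_le_one
  refine setIntegral_mono_on ((integrableOn_rpow_mul_exp_neg hs₁).mono_set hIoi)
    ((integrableOn_rpow_mul_exp_neg (hs₁.trans_le h)).mono_set hIoi) measurableSet_Ioi
    fun t (ht : 1 < t) => ?_
  gcongr
  linarith

lemma rpow_half_self_le_rpow_half_self {x y : ℝ} (hx : 1 ≤ x) (hxy : x ≤ y) :
    x ^ (x / 2) ≤ y ^ (y / 2) :=
  calc x ^ (x / 2) ≤ y ^ (x / 2) := rpow_le_rpow (by linarith) hxy (by linarith)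
    _ ≤ y ^ (y / 2) := rpow_le_rpow_of_exponent_le (hx.trans hxy) (by linarith)

lemma C'_nonneg (n : ℕ) : 0 ≤ C' n := by
  unfold C'
  have := gammaIncOne_nonneg ((n : ℝ) / 2)
  positivity

lemma C'_le_C' {m n : ℕ} (hm : 0 < m) (hmn : m ≤ n) : C' m ≤ C' n := by
  have hm' : (1 : ℝ) ≤ m := by exact_mod_cast hm
  have hmn' : (m : ℝ) ≤ n := by exact_mod_cast hmn
  unfold C'
  gcongr ?_ * _ * ?_ / _
  · exact gammaIncOne_nonneg _
  · exact rpow_half_self_le_rpow_half_self hm' hmn'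
  · exact gammaIncOne_mono (by positivity) (by linarith)

lemma monotone_natCast_mul_C' : Monotone fun n : ℕ => (n : ℝ) * C' n := by
  intro m n hmn
  rcases Nat.eq_zero_or_pos m with rfl | hm
  · simpa using mul_nonneg (Nat.cast_nonneg n) (C'_nonneg n)
  · exact mul_le_mul (by exact_mod_cast hmn) (C'_le_C' hm hmn) (C'_nonneg m) (Nat.cast_nonneg n)

lemma epsCLY_pos (n : ℕ) : 0 < epsCLY n := by
  unfold epsCLY
  positivity

lemma epsCLY_strictAnti : StrictAnti epsCLY := by
  intro m n hmn
  have hmn' : (m : ℝ) < n := by exact_mod_cast hmn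
  have hexp : exp (2 * m * C' m) ≤ exp (2 * n * C' n) := by
    have hmul : (m : ℝ) * C' m ≤ n * C' n := monotone_natCast_mul_C' hmn.le
    exact exp_le_exp.mpr (by linarith)
  unfold epsCLY
  gcongr 1 / ?_
  linarith

noncomputable def gammaLowerIncOne (s : ℝ) : ℝ :=
  ∫ t in (0 : ℝ)..1, t ^ (s - 1) * exp (-t)

lemma gammaLowerIncOne_add_gammaIncOne {s : ℝ} (hs : 0 < s) :
    gammaLowerIncOne s + gammaIncOne s = Gamma s := by
  have hint := integrableOn_rpow_mul_exp_neg hs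
  rw [Gamma_eq_integral hs, gammaLowerIncOne, gammaIncOne,
    intervalIntegral.integral_of_le zero_le_one,
    ← setIntegral_union (Ioc_disjoint_Ioi le_rfl) measurableSet_Ioi
      (hint.mono_set Ioc_subset_Ioi_self) (hint.mono_set (Ioi_subset_Ioi zero_le_one)),
    Ioc_union_Ioi_eq_Ioi zero_le_one]
  exact setIntegral_congr_fun measurableSet_Ioi fun _ _ => mul_comm _ _

lemma integral_sum_neg_pow_div_factorial_mul_rpow {s : ℝ} (hs : 0 < s) (n : ℕ) :
    ∫ t in (0 : ℝ)..1, (∑ k ∈ Finset.range n, (-t) ^ k / k !) * t ^ (s - 1) =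
      ∑ k ∈ Finset.range n, (-1) ^ k / (k ! * (k + s)) := by
  have hpow (k : ℕ) : -1 < (k : ℝ) + (s - 1) := by linarith [(k.cast_nonneg : (0 : ℝ) ≤ k)]
  calc ∫ t in (0 : ℝ)..1, (∑ k ∈ Finset.range n, (-t) ^ k / k !) * t ^ (s - 1)
      = ∫ t in (0 : ℝ)..1, ∑ k ∈ Finset.range n, (-1) ^ k / k ! * t ^ ((k : ℝ) + (s - 1)) := by
        refine intervalIntegral.integral_congr_ae (ae_of_all _ fun t ht => ?_)
        rw [uIoc_of_le zero_le_one] at ht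
        simp only [Finset.sum_mul, rpow_add ht.1, rpow_natCast, neg_pow t]
        exact Finset.sum_congr rfl fun k _ => by rw [mul_div_right_comm, mul_assoc]
    _ = ∑ k ∈ Finset.range n, (-1) ^ k / (k ! * (k + s)) := by
        rw [intervalIntegral.integral_finsetSum fun k _ =>
          (intervalIntegral.intervalIntegrable_rpow' (hpow k)).const_mul _]
        refine Finset.sum_congr rfl fun k _ => ?_
        rw [intervalIntegral.integral_const_mul, integral_rpow (Or.inl (hpow k)), one_rpow,
          zero_rpow (by linarith [hpow k]), show (k : ℝ) + (s - 1) + 1 = k + s by ring, sub_zero,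
          mul_one_div, div_div]

lemma abs_exp_neg_sub_sum_le {t : ℝ} (ht₀ : 0 ≤ t) (ht₁ : t ≤ 1) {n : ℕ} (hn : 0 < n) :
    |exp (-t) - ∑ k ∈ Finset.range n, (-t) ^ k / k !| ≤ (n + 1) / (n ! * n) := by
  have htn : |-t| ^ n ≤ 1 := by
    rw [abs_neg, abs_of_nonneg ht₀]
    exact pow_le_one₀ ht₀ ht₁
  calc |exp (-t) - ∑ k ∈ Finset.range n, (-t) ^ k / k !|
      ≤ |-t| ^ n * ((n.succ : ℝ) / (n ! * n)) :=
        exp_bound (by rwa [abs_neg, abs_of_nonneg ht₀]) hn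
    _ ≤ (n + 1) / (n ! * n) := by
        push_cast
        exact mul_le_of_le_one_left (by positivity) htn

lemma abs_gammaLowerIncOne_sub_sum_le {s : ℝ} (hs : 0 < s) {n : ℕ} (hn : 0 < n) :
    |gammaLowerIncOne s - ∑ k ∈ Finset.range n, (-1) ^ k / (k ! * (k + s))| ≤
      (n + 1) / (n ! * n) / s := by
  set T : ℝ → ℝ := fun t => ∑ k ∈ Finset.range n, (-t) ^ k / (k ! : ℝ)
  have hrpow : IntervalIntegrable (fun t : ℝ => t ^ (s - 1)) volume 0 1 :=
    intervalIntegral.intervalIntegrable_rpow' (by linarith)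
  have hgamma : IntervalIntegrable (fun t : ℝ => t ^ (s - 1) * exp (-t)) volume 0 1 :=
    (intervalIntegrable_iff_integrableOn_Ioc_of_le zero_le_one).mpr
      ((integrableOn_rpow_mul_exp_neg hs).mono_set Ioc_subset_Ioi_self)
  have htaylor : IntervalIntegrable (fun t => T t * t ^ (s - 1)) volume 0 1 :=
    hrpow.continuousOn_mul (by fun_prop)
  have hint_rpow : ∫ t in (0 : ℝ)..1, t ^ (s - 1) = 1 / s := by
    rw [integral_rpow (Or.inl (by linarith)), one_rpow, zero_rpow (by linarith)]
    simp
  rw [← integral_sum_neg_pow_div_factorial_mul_rpow hs, gammaLowerIncOne,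
    ← intervalIntegral.integral_sub hgamma htaylor]
  calc |∫ t in (0 : ℝ)..1, t ^ (s - 1) * exp (-t) - T t * t ^ (s - 1)|
      ≤ ∫ t in (0 : ℝ)..1, (n + 1) / (n ! * n) * t ^ (s - 1) := by
        rw [← Real.norm_eq_abs]
        refine intervalIntegral.norm_integral_le_of_norm_le zero_le_one
          (ae_of_all _ fun t (ht : t ∈ Set.Ioc 0 1) => ?_) (hrpow.const_mul _)
        have ht_rpow : 0 < t ^ (s - 1) := rpow_pos_of_pos ht.1 _
        rw [mul_comm (t ^ (s - 1)), ← sub_mul, Real.norm_eq_abs, abs_mul, abs_of_pos ht_rpow]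
        exact mul_le_mul_of_nonneg_right (abs_exp_neg_sub_sum_le ht.1.le ht.2 hn) ht_rpow.le
    _ = (n + 1) / (n ! * n) / s := by
        rw [intervalIntegral.integral_const_mul, hint_rpow, mul_one_div]

lemma Gamma_three_halves : Gamma (3 / 2) = √π / 2 := by
  rw [show (3 : ℝ) / 2 = 1 / 2 + 1 by norm_num, Gamma_add_one (by norm_num), Gamma_one_half_eq]
  ring

lemma sqrt_pi_mem : √π ∈ Ioo (1.77245 : ℝ) 1.772454 := by
  constructor
  · rw [lt_sqrt (by norm_num)]
    linarith [pi_gt_d6]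
  · rw [sqrt_lt' (by norm_num)]
    linarith [pi_lt_d6]

lemma gammaIncOne_three_halves_mem : gammaIncOne (3 / 2) ∈ Ioo (0.5071 : ℝ) 0.5075 := by
  have herr := abs_le.mp (abs_gammaLowerIncOne_sub_sum_le (s := 3 / 2) (by norm_num) (n := 7)
    (by norm_num))
  norm_num [Finset.sum_range_succ, Nat.factorial] at herr
  have hsum := gammaLowerIncOne_add_gammaIncOne (s := 3 / 2) (by norm_num)
  rw [Gamma_three_halves] at hsum
  obtain ⟨hπ₀, hπ₁⟩ := sqrt_pi_mem
  constructor <;> linarith [herr.1, herr.2]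

lemma C'_three : C' 3 = √27 * exp 1 * gammaIncOne (3 / 2) / 2 := by
  have h : (3 : ℝ) ^ ((3 : ℝ) / 2) = √27 := by
    rw [sqrt_eq_rpow, show (3 : ℝ) / 2 = 3 * (1 / 2) by norm_num, rpow_mul (by norm_num)]
    norm_num
  rw [C', Nat.cast_ofNat, h]

lemma six_mul_C'_three_mem : 2 * 3 * C' 3 ∈ Ioo (21.48 : ℝ) 21.51 := by
  obtain ⟨hG₀, hG₁⟩ := gammaIncOne_three_halves_mem
  have h27₀ : (5.196 : ℝ) < √27 := by rw [lt_sqrt (by norm_num)]; norm_num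
  have h27₁ : √27 < 5.1962 := by rw [sqrt_lt' (by norm_num)]; norm_num
  have he₀ : (2.718 : ℝ) < exp 1 := by linarith [exp_one_gt_d9]
  have he₁ : exp 1 < 2.7183 := by linarith [exp_one_lt_d9]
  rw [C'_three, show ∀ x : ℝ, 2 * 3 * (x / 2) = 3 * x by intro x; ring]
  constructor
  · calc (21.48 : ℝ) < 3 * (5.196 * 2.718 * 0.5071) := by norm_num
      _ < 3 * (√27 * exp 1 * gammaIncOne (3 / 2)) := by gcongr
  · calc 3 * (√27 * exp 1 * gammaIncOne (3 / 2)) < 3 * (5.1962 * 2.7183 * 0.5075) := by gcongr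
      _ < 21.51 := by norm_num

lemma exp_21_48_gt : (2.1e9 : ℝ) < exp 21.48 := by
  have h := abs_le.mp (exp_bound (x := 0.48) (by norm_num [abs_of_pos]) (n := 4) (by norm_num))
  norm_num [Finset.sum_range_succ, Nat.factorial, abs_of_pos] at h
  have he : (2.718 : ℝ) ^ 21 < exp 1 ^ 21 := by gcongr; linarith [exp_one_gt_d9]
  rw [show (21.48 : ℝ) = (21 : ℕ) + 0.48 by norm_num, exp_add, ← exp_one_pow]
  calc (2.1e9 : ℝ) < 2.718 ^ 21 * 1.6108 := by norm_num
    _ < exp 1 ^ 21 * exp 0.48 := by gcongr; linarith [h.1]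

lemma exp_21_51_lt : exp 21.51 < (2.2e9 : ℝ) := by
  have h := abs_le.mp (exp_bound (x := 0.51) (by norm_num [abs_of_pos]) (n := 4) (by norm_num))
  norm_num [Finset.sum_range_succ, Nat.factorial, abs_of_pos] at h
  have he : exp 1 ^ 21 < (2.7183 : ℝ) ^ 21 := by gcongr; linarith [exp_one_lt_d9]
  rw [show (21.51 : ℝ) = (21 : ℕ) + 0.51 by norm_num, exp_add, ← exp_one_pow]
  calc exp 1 ^ 21 * exp 0.51 < 2.7183 ^ 21 * 1.6657 := by gcongr; linarith [h.2]
    _ < 2.2e9 := by norm_num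

lemma epsCLY_three_mem : epsCLY 3 ∈ Ioo (2.2e-10 : ℝ) 2.4e-10 := by
  obtain ⟨hy₀, hy₁⟩ := six_mul_C'_three_mem
  have hE₀ : (2.1e9 : ℝ) < exp (2 * 3 * C' 3) := exp_21_48_gt.trans (exp_lt_exp.mpr hy₀)
  have hE₁ : exp (2 * 3 * C' 3) < 2.2e9 := (exp_lt_exp.mpr hy₁).trans exp_21_51_lt
  rw [epsCLY, Nat.cast_ofNat]
  constructor
  · rw [lt_one_div (by norm_num) (by positivity)]
    linarith
  · rw [one_div_lt (by positivity) (by norm_num)]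
    linarith

theorem epsCLY_props :
    (∀ n : ℕ, 3 ≤ n → 0 < epsCLY n) ∧
    (∀ n : ℕ, 3 < n → epsCLY n < epsCLY 3) ∧
    (2.2e-10 : ℝ) < epsCLY 3 ∧ epsCLY 3 < (2.4e-10 : ℝ) :=
  ⟨fun n _ => epsCLY_pos n, fun _ hn => epsCLY_strictAnti hn, epsCLY_three_mem⟩
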